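/- arXiv:2302.06894 — 5 statements merged into one kernel-verified Lean document; each statement's English description precedes it below -/
import Mathlib

section
/- The Szenes–Vergne formula: if α₁,…,α_k are vectors in ℤⁿ with ∑ᵢ αᵢ ≠ 0, then ∏_{i=1}^{k} 1/(1 - x^{αᵢ}) = (1/(1 - x^{∑αᵢ})) · ∑_{j=1}^{k} [x^{α₁}⋯x^{α_{j-1}} / ((1-x^{α₁})⋯(1-x^{α_{j-1}})(1-x^{α_{j+1}})⋯(1-x^{α_k}))], as an identity in the localization of the Laurent polynomial ring at the elements (1 - x^β). -/
open Finset

lemma tel {K : Type*} [CommRing K] (k : ℕ) (a : Fin k → K) :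
    ∑ j : Fin k, (∏ i ∈ Finset.univ.filter (fun i => i < j), a i) * (1 - a j)
      = 1 - ∏ i, a i := by
  set b : ℕ → K := fun i => if h : i < k then a ⟨i, h⟩ else 1 with hb
  have hba : ∀ j : Fin k, b j.val = a j := by
    intro j; simp [hb, j.isLt]
  have hfil : ∀ j : Fin k, ∏ i ∈ Finset.univ.filter (fun i => i < j), a i
      = ∏ i ∈ Finset.range j.val, b i := by
    intro j
    have h1 : Finset.univ.filter (fun i => i < j) = Finset.Iio j := by
      ext i; simp
    have h2 := Finset.prod_map (Finset.Iio j) Fin.valEmbedding b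
    rw [Fin.map_valEmbedding_Iio] at h2
    rw [h1, ← Nat.Iio_eq_range, h2]
    exact Finset.prod_congr rfl (fun i _ => (hba i).symm)
  calc ∑ j : Fin k, (∏ i ∈ Finset.univ.filter (fun i => i < j), a i) * (1 - a j)
      = ∑ j : Fin k, (fun m => (∏ i ∈ Finset.range m, b i) * (1 - b m)) j.val := by
        refine Finset.sum_congr rfl fun j _ => ?_
        simp only [hfil j, hba j]
    _ = ∑ j ∈ Finset.range k, (∏ i ∈ Finset.range j, b i) * (1 - b j) :=
        Fin.sum_univ_eq_sum_range (fun m => (∏ i ∈ Finset.range m, b i) * (1 - b m)) k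
    _ = ∑ j ∈ Finset.range k, (∏ i ∈ Finset.range j, b i - ∏ i ∈ Finset.range (j+1), b i) := by
        refine Finset.sum_congr rfl fun j _ => ?_
        rw [Finset.prod_range_succ]; ring
    _ = ∏ i ∈ Finset.range 0, b i - ∏ i ∈ Finset.range k, b i :=
        Finset.sum_range_sub' (fun j => ∏ i ∈ Finset.range j, b i) k
    _ = 1 - ∏ i, a i := by
        rw [Finset.prod_range_zero]
        congr 1
        rw [← Fin.prod_univ_eq_prod_range b k]
        exact Finset.prod_congr rfl (fun i _ => hba i)

/-- The Szenes–Vergne formula. Work in a field `K` containing the Laurent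
monomials `x^α` (given by a multiplicative map `x : ℤⁿ → K`); the hypotheses
`x (α i) ≠ 1` and `x (∑ α i) ≠ 1` express that we work in a localization where the
elements `1 - x^β` appearing are invertible. If `∑ᵢ αᵢ ≠ 0` then
`∏_{i=1}^{k} 1/(1 - x^{αᵢ}) = (1/(1 - x^{∑αᵢ})) ·
  ∑_{j=1}^{k} [ x^{α₁}⋯x^{α_{j-1}} / ((1-x^{α₁})⋯(1-x^{α_{j-1}})(1-x^{α_{j+1}})⋯(1-x^{α_k})) ]`. -/
theorem szenes_vergne_formula {K : Type*} [Field K] (n k : ℕ)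
    (x : (Fin n → ℤ) → K) (hx : ∀ a b, x (a + b) = x a * x b)
    (α : Fin k → (Fin n → ℤ)) (hsum0 : ∑ i, α i ≠ 0)
    (h1 : ∀ i, x (α i) ≠ 1) (h2 : x (∑ i, α i) ≠ 1) :
    ∏ i, (1 - x (α i))⁻¹ =
      (1 - x (∑ i, α i))⁻¹ *
        ∑ j : Fin k,
          (∏ i ∈ Finset.univ.filter (fun i => i < j), (x (α i) * (1 - x (α i))⁻¹)) *
            ∏ i ∈ Finset.univ.filter (fun i => j < i), (1 - x (α i))⁻¹ := by
  -- k ≠ 0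
  have hk : k ≠ 0 := by
    rintro rfl
    exact hsum0 (by simp)
  set a : Fin k → K := fun i => x (α i) with ha
  -- x of the sum equals the product
  have hS : x (∑ i, α i) = ∏ i, a i := by
    clear h2 hsum0 h1
    obtain ⟨m, rfl⟩ := Nat.exists_eq_succ_of_ne_zero hk
    induction m with
    | zero => simp [ha]
    | succ m ih =>
        rw [Fin.sum_univ_succ, Fin.prod_univ_succ, hx]
        rw [ih (fun i => α i.succ) (by simp) rfl]
  have hne : ∀ i, (1 : K) - a i ≠ 0 := fun i => sub_ne_zero.mpr (Ne.symm (h1 i))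
  have hP : ∀ i, (1 : K) - a i ≠ 0 := hne
  set P : K := ∏ i, (1 - a i)⁻¹ with hPdef
  have hSne : (1 : K) - x (∑ i, α i) ≠ 0 := sub_ne_zero.mpr (Ne.symm h2)
  -- the partition of univ into <j, j, >j
  have hpart : ∀ j : Fin k,
      (∏ i ∈ Finset.univ.filter (fun i => i < j), (1 - a i)⁻¹) *
        ∏ i ∈ Finset.univ.filter (fun i => j < i), (1 - a i)⁻¹ = (1 - a j) * P := by
    intro j
    have hset : Finset.univ.filter (fun i => ¬ i < j)
        = insert j (Finset.univ.filter (fun i => j < i)) := by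
      ext i
      simp only [Finset.mem_filter, Finset.mem_univ, true_and, Finset.mem_insert,
        not_lt, Fin.lt_def, Fin.le_def, Fin.ext_iff]
      omega
    have hP2 : P = (∏ i ∈ Finset.univ.filter (fun i => i < j), (1 - a i)⁻¹) *
        ((1 - a j)⁻¹ * ∏ i ∈ Finset.univ.filter (fun i => j < i), (1 - a i)⁻¹) := by
      rw [hPdef, ← Finset.prod_filter_mul_prod_filter_not Finset.univ (fun i => i < j)]
      congr 1
      rw [hset, Finset.prod_insert (by simp)]
    rw [hP2]
    rw [show (1 - a j) * ((∏ i ∈ Finset.univ.filter (fun i => i < j), (1 - a i)⁻¹) *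
        ((1 - a j)⁻¹ * ∏ i ∈ Finset.univ.filter (fun i => j < i), (1 - a i)⁻¹))
      = ((1 - a j) * (1 - a j)⁻¹) *
        ((∏ i ∈ Finset.univ.filter (fun i => i < j), (1 - a i)⁻¹) *
          ∏ i ∈ Finset.univ.filter (fun i => j < i), (1 - a i)⁻¹) from by ring,
      mul_inv_cancel₀ (hne j), one_mul]
  -- rewrite each summand
  have hterm : ∀ j : Fin k,
      (∏ i ∈ Finset.univ.filter (fun i => i < j), (a i * (1 - a i)⁻¹)) *
        ∏ i ∈ Finset.univ.filter (fun i => j < i), (1 - a i)⁻¹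
      = ((∏ i ∈ Finset.univ.filter (fun i => i < j), a i) * (1 - a j)) * P := by
    intro j
    rw [Finset.prod_mul_distrib, mul_assoc, hpart j]
    ring
  calc ∏ i, (1 - x (α i))⁻¹ = P := rfl
    _ = (1 - x (∑ i, α i))⁻¹ * ((1 - x (∑ i, α i)) * P) := by
        field_simp
    _ = (1 - x (∑ i, α i))⁻¹ *
        ∑ j : Fin k, (∏ i ∈ Finset.univ.filter (fun i => i < j), (a i * (1 - a i)⁻¹)) *
          ∏ i ∈ Finset.univ.filter (fun i => j < i), (1 - a i)⁻¹ := by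
        congr 1
        rw [Finset.sum_congr rfl (fun j _ => hterm j), ← Finset.sum_mul, tel k a, hS]
    _ = _ := rfl
end

section
/- The Brion–Vergne raising identity: let α₁,…,αₙ ∈ ℤⁿ be linearly independent and β₁,…,βₙ the dual basis (⟨βᵢ,α_k⟩ = δ_{ik}). Then for positive integers m₁,…,mₙ, the differential operator ξ = ∏_{i=1}^{n} ∏_{j=1}^{mᵢ-1} (∂_{βᵢ}/j + 1) satisfies ξ(∏_{i=1}^{n} 1/(1 - x^{αᵢ})) = ∏_{i=1}^{n} 1/(1 - x^{αᵢ})^{mᵢ}. -/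
/-- The Brion–Vergne raising identity. Abstractly: let `R` be a commutative
`ℚ`-algebra (e.g. the localization of the Laurent polynomial ring at the elements
`1 - x^{αᵢ}` for linearly independent `α₁,…,αₙ ∈ ℤⁿ`), let `D i` be the derivations
`∂_{βᵢ}` associated with the dual basis `β₁,…,βₙ`, so that `D i (x^{α j}) = δ_{ij} x^{α j}`
(hypothesis `hD`, with `u j = x^{α j}`), and let `v i = 1/(1 - x^{α i})` (hypothesis `hv`).
Then for positive integers `m₁,…,mₙ` the operator
`ξ = ∏_{i=1}^{n} ∏_{j=1}^{mᵢ-1} (∂_{βᵢ}/j + 1)` satisfies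
`ξ(∏_{i=1}^{n} 1/(1 - x^{αᵢ})) = ∏_{i=1}^{n} 1/(1 - x^{αᵢ})^{mᵢ}`. -/
theorem brion_vergne_raising {R : Type*} [CommRing R] [Algebra ℚ R] (n : ℕ)
    (D : Fin n → Derivation ℚ R R) (u v : Fin n → R)
    (hv : ∀ i, v i * (1 - u i) = 1)
    (hD : ∀ i j, D i (u j) = if i = j then u j else 0)
    (m : Fin n → ℕ) (hm : ∀ i, 1 ≤ m i) :
    (((List.finRange n).map (fun i =>
        ((List.range (m i - 1)).map (fun j =>
            ((j + 1 : ℚ))⁻¹ • (D i).toLinearMap + (1 : Module.End ℚ R))).prod)).prod :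
      Module.End ℚ R) (∏ i, v i) = ∏ i, v i ^ m i := by

  have hvu : ∀ i, v i * u i = v i - 1 := fun i => by linear_combination -hv i
  have hDv : ∀ i k, D i (v k) = if i = k then v k * v k * u k else 0 := by
    intro i k
    have h1 : D i (v k * (1 - u k)) = 0 := by rw [hv]; exact Derivation.map_one_eq_zero _
    rw [Derivation.leibniz] at h1
    simp only [smul_eq_mul, map_sub, Derivation.map_one_eq_zero, hD] at h1
    by_cases h : i = k
    · simp only [if_pos h] at h1 ⊢
      linear_combination v k * h1 - D i (v k) * hv k
    · simp only [if_neg h] at h1 ⊢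
      linear_combination v k * h1 - D i (v k) * hv k
  have hDv0 : ∀ i k, i ≠ k → D i (v k) = 0 := fun i k h => by rw [hDv, if_neg h]
  have hDpow : ∀ (i : Fin n) (a : R) (c : ℕ), D i a = 0 → D i (a ^ c) = 0 := by
    intro i a c h
    rw [Derivation.leibniz_pow, h, smul_zero, smul_zero]
  have hDlist : ∀ (i : Fin n) (l : List R), (∀ x ∈ l, D i x = 0) → D i l.prod = 0 := by
    intro i l hl
    induction l with
    | nil => simp
    | cons a t ih =>
        rw [List.prod_cons, Derivation.leibniz, hl a (by simp),
          ih (fun x hx => hl x (List.mem_cons_of_mem _ hx)), smul_zero, smul_zero, add_zero]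
  -- single raising step
  have hstep : ∀ (i : Fin n) (Q : R) (j : ℕ), D i Q = 0 →
      (((j + 1 : ℚ))⁻¹ • (D i).toLinearMap + (1 : Module.End ℚ R)) (v i ^ (j + 1) * Q)
        = v i ^ (j + 2) * Q := by
    intro i Q j hQ
    have hne : ((j : ℚ) + 1) ≠ 0 := by positivity
    have hE : D i (v i ^ (j + 1) * Q)
        = ((j : ℚ) + 1) • (v i ^ (j + 2) * Q - v i ^ (j + 1) * Q) := by
      rw [Derivation.leibniz, hQ, smul_zero, zero_add, Derivation.leibniz_pow,
        hDv i i, if_pos rfl, Nat.add_sub_cancel]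
      simp only [smul_eq_mul]
      rw [mul_smul_comm, ← Nat.cast_smul_eq_nsmul ℚ]
      push_cast
      congr 1
      linear_combination (v i ^ (j + 1) * Q) * hvu i
    rw [LinearMap.add_apply, LinearMap.smul_apply, Module.End.one_apply,
      Derivation.coeFn_coe, hE, smul_smul, inv_mul_cancel₀ hne, one_smul]
    ring
  -- the inner operators pairwise commute
  have hcomm : ∀ (i : Fin n) (a b : ℚ),
      Commute (a • (D i).toLinearMap + (1 : Module.End ℚ R))
        (b • (D i).toLinearMap + (1 : Module.End ℚ R)) := by
    intro i a b
    set d := (D i).toLinearMap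
    have key : ∀ (a b : ℚ), (a • d + (1 : Module.End ℚ R)) * (b • d + 1)
        = (a * b) • (d * d) + a • d + (b • d + 1) := by
      intro a b
      rw [add_mul, one_mul, mul_add, mul_one, smul_mul_assoc, mul_smul_comm, smul_smul]
    have : (a • d + (1 : Module.End ℚ R)) * (b • d + 1)
        = (b • d + 1) * (a • d + 1) := by
      rw [key, key, mul_comm a b]
      abel
    exact this
  -- inner product raises the power
  have hinner : ∀ (i : Fin n) (Q : R), D i Q = 0 → ∀ k : ℕ,
      (((List.range k).map (fun (j : ℕ) =>
          (((j : ℚ)) + 1)⁻¹ • (D i).toLinearMap + (1 : Module.End ℚ R))).prod)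
        (v i * Q) = v i ^ (k + 1) * Q := by
    intro i Q hQ k
    set f : ℕ → Module.End ℚ R := fun (j : ℕ) =>
      (((j : ℚ)) + 1)⁻¹ • (D i).toLinearMap + (1 : Module.End ℚ R) with hf
    have hrev : ∀ k, ((List.range k).map f).prod
        = (((List.range k).reverse).map f).prod := by
      intro k
      refine List.Perm.prod_eq' ?_ ?_
      · rw [List.map_reverse]
        exact (List.reverse_perm _).symm
      · exact List.pairwise_map.2 (((List.pairwise_lt_range).imp fun _ => hcomm i _ _))
    rw [hrev]
    induction k with
    | zero => simp
    | succ k ih =>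
        rw [List.range_succ, List.reverse_append, List.reverse_singleton,
          List.singleton_append, List.map_cons, List.prod_cons, Module.End.mul_apply, ih]
        exact hstep i Q k hQ
  -- main list induction
  have hlist : ∀ (l : List (Fin n)), l.Nodup → ∀ (C : R), (∀ i ∈ l, D i C = 0) →
      (((l.map (fun i =>
          ((List.range (m i - 1)).map (fun (j : ℕ) =>
              (((j : ℚ)) + 1)⁻¹ • (D i).toLinearMap + (1 : Module.End ℚ R))).prod)).prod :
        Module.End ℚ R) ((l.map v).prod * C))
        = (l.map (fun i => v i ^ m i)).prod * C := by
    intro l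
    induction l with
    | nil => intro _ C _; simp
    | cons i t ih =>
        intro hnd C hC
        rw [List.nodup_cons] at hnd
        rw [List.map_cons, List.prod_cons, Module.End.mul_apply,
          List.map_cons, List.prod_cons, List.map_cons, List.prod_cons]
        have h1 : ∀ k ∈ t, D k (v i * C) = 0 := by
          intro k hk
          have hki : k ≠ i := fun h => hnd.1 (h ▸ hk)
          rw [Derivation.leibniz, hDv0 k i hki, hC k (List.mem_cons_of_mem _ hk),
            smul_zero, smul_zero, add_zero]
        have harg : v i * (t.map v).prod * C = (t.map v).prod * (v i * C) := by ring
        rw [harg, ih hnd.2 (v i * C) h1]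
        have hQ : D i ((t.map (fun k => v k ^ m k)).prod * C) = 0 := by
          rw [Derivation.leibniz, hC i (by simp),
            hDlist i _ ?_, smul_zero, smul_zero, add_zero]
          intro x hx
          obtain ⟨k, hk, rfl⟩ := List.mem_map.1 hx
          exact hDpow i _ _ (hDv0 i k (fun h => hnd.1 (h ▸ hk)))
        have harg2 : (t.map (fun k => v k ^ m k)).prod * (v i * C)
            = v i * ((t.map (fun k => v k ^ m k)).prod * C) := by ring
        rw [harg2, hinner i _ hQ (m i - 1), Nat.sub_add_cancel (hm i)]
        ring
  simp only [bind_pure_comp, List.map_eq_map, List.map_map, Function.comp_def]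
  have hfin := hlist (List.finRange n) (List.nodup_finRange n) 1
    (fun i _ => Derivation.map_one_eq_zero _)
  rw [mul_one, mul_one] at hfin
  rw [Fin.prod_univ_def, Fin.prod_univ_def]
  exact hfin
end

section
/- Floor elimination for quasiperiodic linear forms: let Λ ⊆ ℤⁿ be a full-rank lattice, a ∈ ℚⁿ, c ∈ ℚ, and let Ω = {γ ∈ Λ : ⟨a,γ⟩ ∈ ℤ}. Then Ω is a full-rank lattice, and for each coset μ + Ω of Ω, the function γ ↦ ⌊⟨a,γ⟩ + c⌋ restricted to μ + Ω equals ⟨a,γ⟩ − d_μ where d_μ = ⟨a,μ⟩ − ⌊⟨a,μ⟩ + c⌋ is constant on the coset. Consequently, for any function f : ℚ → ℚ, the function γ ↦ ι_{δ+Λ}(γ)·f(⌊⟨a,γ⟩+c⌋) is a finite sum of terms ι_{μ+Ω}(γ)·f(⟨a,γ⟩ − d_μ). -/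
open scoped Classical in
/-- Floor elimination for quasiperiodic linear forms. Let `Λ ⊆ ℤⁿ` be a
full-rank lattice (finite-index subgroup), `a ∈ ℚⁿ`, `c ∈ ℚ`, and
`Ω = {γ ∈ Λ : ⟨a,γ⟩ ∈ ℤ}`. Then: `Ω` is a full-rank lattice; on each coset `μ + Ω` the
function `γ ↦ ⌊⟨a,γ⟩ + c⌋` equals `⟨a,γ⟩ − d_μ` where `d_μ = ⟨a,μ⟩ − ⌊⟨a,μ⟩ + c⌋` is
constant on the coset; and consequently, for any `f : ℚ → ℚ`, any `δ` and any complete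
set `T` of representatives of `ℤⁿ/Ω`, the function
`γ ↦ ι_{δ+Λ}(γ)·f(⌊⟨a,γ⟩+c⌋)` equals the finite sum
`∑_{μ ∈ T, μ-δ ∈ Λ} ι_{μ+Ω}(γ)·f(⟨a,γ⟩ − d_μ)`. -/
theorem floor_elimination (n : ℕ) (Λ : AddSubgroup (Fin n → ℤ)) (hΛ : Λ.FiniteIndex)
    (a : Fin n → ℚ) (c : ℚ) (Ω : AddSubgroup (Fin n → ℤ))
    (hΩ : ∀ γ : Fin n → ℤ, γ ∈ Ω ↔ γ ∈ Λ ∧ ∃ z : ℤ, ∑ k, a k * (γ k : ℚ) = z) :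
    Ω.FiniteIndex ∧
    (∀ μ γ : Fin n → ℤ, γ - μ ∈ Ω →
      (⌊(∑ k, a k * (γ k : ℚ)) + c⌋ : ℚ) =
        (∑ k, a k * (γ k : ℚ)) -
          ((∑ k, a k * (μ k : ℚ)) - ⌊(∑ k, a k * (μ k : ℚ)) + c⌋)) ∧
    (∀ (f : ℚ → ℚ) (δ : Fin n → ℤ) (T : Finset (Fin n → ℤ)),
      (∀ x : Fin n → ℤ, ∃! μ, μ ∈ T ∧ x - μ ∈ Ω) →
      ∀ γ : Fin n → ℤ,
        (if γ - δ ∈ Λ then (1 : ℚ) else 0) * f (⌊(∑ k, a k * (γ k : ℚ)) + c⌋) =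
          ∑ μ ∈ T.filter (fun μ => μ - δ ∈ Λ),
            (if γ - μ ∈ Ω then (1 : ℚ) else 0) *
              f ((∑ k, a k * (γ k : ℚ)) -
                ((∑ k, a k * (μ k : ℚ)) - ⌊(∑ k, a k * (μ k : ℚ)) + c⌋))) := by
  -- difference lemma: the linear form on γ - μ
  have hdiff : ∀ γ μ : Fin n → ℤ,
      (∑ k, a k * (((γ - μ) k : ℤ) : ℚ)) = (∑ k, a k * (γ k : ℚ)) - ∑ k, a k * (μ k : ℚ) := by
    intro γ μ
    rw [← Finset.sum_sub_distrib]
    refine Finset.sum_congr rfl fun k _ => ?_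
    simp [Pi.sub_apply, mul_sub]
  -- Part 2
  have part2 : ∀ μ γ : Fin n → ℤ, γ - μ ∈ Ω →
      (⌊(∑ k, a k * (γ k : ℚ)) + c⌋ : ℚ) =
        (∑ k, a k * (γ k : ℚ)) -
          ((∑ k, a k * (μ k : ℚ)) - ⌊(∑ k, a k * (μ k : ℚ)) + c⌋) := by
    intro μ γ hγμ
    obtain ⟨-, z, hz⟩ := (hΩ _).1 hγμ
    rw [hdiff] at hz
    have hγ : (∑ k, a k * (γ k : ℚ)) = z + ∑ k, a k * (μ k : ℚ) := by linarith
    rw [hγ, add_assoc, Int.floor_intCast_add]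
    push_cast
    ring
  -- Part 1 : finite index
  have part1 : Ω.FiniteIndex := by
    set D : ℕ := ∏ k, (a k).den with hD
    have hDpos : 0 < D := Finset.prod_pos (fun k _ => (a k).pos)
    haveI : NeZero D := ⟨hDpos.ne'⟩
    have hb : ∀ k, ∃ m : ℤ, (m : ℚ) = a k * D := by
      intro k
      obtain ⟨e, he⟩ : (a k).den ∣ D := Finset.dvd_prod_of_mem _ (Finset.mem_univ k)
      refine ⟨(a k).num * e, ?_⟩
      have h1 : a k * ((a k).den : ℚ) = ((a k).num : ℚ) := Rat.mul_den_eq_num _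
      push_cast [he]
      rw [← h1]; ring
    choose b hbspec using hb
    -- the hom to ZMod D
    let φ : (Fin n → ℤ) →+ ZMod D := AddMonoidHom.mk'
      (fun γ => ∑ k, (b k : ZMod D) * (γ k : ZMod D))
      (by
        intro x y
        rw [← Finset.sum_add_distrib]
        refine Finset.sum_congr rfl fun k _ => ?_
        push_cast [Pi.add_apply]
        ring)
    have hker : ∀ γ : Fin n → ℤ, γ ∈ φ.ker ↔ ∃ z : ℤ, ∑ k, a k * (γ k : ℚ) = z := by
      intro γ
      have hcast : ((∑ k, b k * γ k : ℤ) : ZMod D) = φ γ := by push_cast; rfl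
      have hQ : ((∑ k, b k * γ k : ℤ) : ℚ) = D * ∑ k, a k * (γ k : ℚ) := by
        push_cast
        rw [Finset.mul_sum]
        refine Finset.sum_congr rfl fun k _ => ?_
        rw [hbspec k]; ring
      rw [AddMonoidHom.mem_ker, ← hcast, ZMod.intCast_zmod_eq_zero_iff_dvd]
      constructor
      · rintro ⟨m, hm⟩
        refine ⟨m, ?_⟩
        have : ((∑ k, b k * γ k : ℤ) : ℚ) = (D : ℚ) * m := by exact_mod_cast congrArg (Int.cast : ℤ → ℚ) hm
        rw [hQ] at this
        have hDne : (D : ℚ) ≠ 0 := by positivity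
        exact mul_left_cancel₀ hDne this
      · rintro ⟨z, hz⟩
        refine ⟨z, ?_⟩
        have : ((∑ k, b k * γ k : ℤ) : ℚ) = (((D : ℤ) * z : ℤ) : ℚ) := by
          rw [hQ, hz]; push_cast; ring
        exact_mod_cast this
    have hΩeq : Ω = Λ ⊓ φ.ker := by
      ext γ
      rw [hΩ, AddSubgroup.mem_inf, hker]
    haveI := hΛ
    haveI : Finite φ.range := Set.Finite.to_subtype (Set.toFinite _)
    haveI : φ.ker.FiniteIndex := AddSubgroup.finiteIndex_ker φ
    rw [hΩeq]
    infer_instance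
  refine ⟨part1, part2, ?_⟩
  -- Part 3
  intro f δ T hT γ
  obtain ⟨μ0, ⟨hμ0T, hμ0Ω⟩, huniq⟩ := hT γ
  have hΩΛ : ∀ x, x ∈ Ω → x ∈ Λ := fun x hx => ((hΩ x).1 hx).1
  by_cases hδ : γ - δ ∈ Λ
  · have hμ0δ : μ0 - δ ∈ Λ := by
      have h1 : γ - μ0 ∈ Λ := hΩΛ _ hμ0Ω
      have := Λ.sub_mem hδ h1
      simpa using this
    rw [if_pos hδ, one_mul]
    rw [Finset.sum_eq_single μ0]
    · rw [if_pos hμ0Ω, one_mul, part2 μ0 γ hμ0Ω]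
    · intro μ hμ hne
      rw [Finset.mem_filter] at hμ
      have : γ - μ ∉ Ω := fun h => hne (huniq μ ⟨hμ.1, h⟩ ▸ rfl)
      rw [if_neg this, zero_mul]
    · intro h
      exact absurd (Finset.mem_filter.mpr (⟨hμ0T, hμ0δ⟩ : μ0 ∈ T ∧ μ0 - δ ∈ Λ)) h
  · rw [if_neg hδ, zero_mul]
    symm
    refine Finset.sum_eq_zero fun μ hμ => ?_
    rw [Finset.mem_filter] at hμ
    have : γ - μ ∉ Ω := by
      intro h
      apply hδ
      have h1 : γ - μ ∈ Λ := hΩΛ _ h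
      have := Λ.add_mem h1 hμ.2
      simpa using this
    rw [if_neg this, zero_mul]
end

section
/- The Occlusion Lemma: let C and D be disjoint open convex subsets of ℝⁿ and ν ∈ ℝⁿ nonzero. For a point α define t_α(S) = inf{t ≥ 0 : α − tν ∈ S} when this set is nonempty. Suppose there exists α with both t_α(C) and t_α(D) defined. Then either t_α(C) ≤ t_α(D) for all α where both are defined, or t_α(D) ≤ t_α(C) for all α where both are defined (i.e. one of the sets occludes the other in direction ν). -/
/-- The Occlusion Lemma. Let `C` and `D` be disjoint open convex subsets of
`ℝⁿ` and `ν ≠ 0`. For a point `α` let `t_α(S) = inf {t ≥ 0 : α − tν ∈ S}`, defined when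
this set is nonempty. If there exists `α` with both `t_α(C)` and `t_α(D)` defined, then
either `t_α(C) ≤ t_α(D)` for all `α` where both are defined, or `t_α(D) ≤ t_α(C)` for all
`α` where both are defined: one of the two sets occludes the other in direction `ν`. -/
theorem occlusion_lemma (n : ℕ) (C D : Set (Fin n → ℝ))
    (hCo : IsOpen C) (hDo : IsOpen D) (hCc : Convex ℝ C) (hDc : Convex ℝ D)
    (hdisj : Disjoint C D) (ν : Fin n → ℝ) (hν : ν ≠ 0)
    (hex : ∃ α : Fin n → ℝ, {t : ℝ | 0 ≤ t ∧ α - t • ν ∈ C}.Nonempty ∧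
      {t : ℝ | 0 ≤ t ∧ α - t • ν ∈ D}.Nonempty) :
    (∀ α : Fin n → ℝ, {t : ℝ | 0 ≤ t ∧ α - t • ν ∈ C}.Nonempty →
        {t : ℝ | 0 ≤ t ∧ α - t • ν ∈ D}.Nonempty →
        sInf {t : ℝ | 0 ≤ t ∧ α - t • ν ∈ C} ≤ sInf {t : ℝ | 0 ≤ t ∧ α - t • ν ∈ D}) ∨
    (∀ α : Fin n → ℝ, {t : ℝ | 0 ≤ t ∧ α - t • ν ∈ C}.Nonempty →
        {t : ℝ | 0 ≤ t ∧ α - t • ν ∈ D}.Nonempty →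
        sInf {t : ℝ | 0 ≤ t ∧ α - t • ν ∈ D} ≤ sInf {t : ℝ | 0 ≤ t ∧ α - t • ν ∈ C}) := by
  by_contra h
  push_neg at h
  obtain ⟨⟨α, hαC, hαD, hα⟩, β, hβC, hβD, hβ⟩ := h
  -- at α : sInf D-set < sInf C-set ; at β : sInf C-set < sInf D-set
  obtain ⟨d, hdmem, hd⟩ := exists_lt_of_csInf_lt hαD hα
  obtain ⟨c0, hc0⟩ := hαC
  have hc0ge : sInf {t : ℝ | 0 ≤ t ∧ α - t • ν ∈ C} ≤ c0 :=
    csInf_le ⟨0, fun t ht => ht.1⟩ hc0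
  have hdc0 : d < c0 := lt_of_lt_of_le hd hc0ge
  obtain ⟨c', hc'mem, hc'⟩ := exists_lt_of_csInf_lt hβC hβ
  obtain ⟨d0, hd0⟩ := hβD
  have hd0ge : sInf {t : ℝ | 0 ≤ t ∧ β - t • ν ∈ D} ≤ d0 :=
    csInf_le ⟨0, fun t ht => ht.1⟩ hd0
  have hc'd0 : c' < d0 := lt_of_lt_of_le hc' hd0ge
  set A : ℝ := c0 - d with hA
  set B : ℝ := d0 - c' with hB
  have hApos : 0 < A := by simp [hA]; linarith
  have hBpos : 0 < B := by simp [hB]; linarith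
  have hABpos : 0 < A + B := by linarith
  set s : ℝ := A / (A + B) with hs
  have hs0 : 0 ≤ s := div_nonneg hApos.le hABpos.le
  have hs1 : s ≤ 1 := by
    rw [hs, div_le_one hABpos]; linarith
  have h1s : 0 ≤ 1 - s := by linarith
  have hsum : (1 - s) + s = 1 := by ring
  -- the key scalar identity
  have hscal : (1 - s) * c0 + s * c' = (1 - s) * d + s * d0 := by
    have h1seq : 1 - s = B / (A + B) := by
      rw [hs]; field_simp; ring
    rw [h1seq, hs]
    field_simp
    ring
  -- the two convex combinations coincide
  have key : (1 - s) • (α - c0 • ν) + s • (β - c' • ν)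
      = (1 - s) • (α - d • ν) + s • (β - d0 • ν) := by
    have expand : ∀ (u v : Fin n → ℝ) (a b : ℝ),
        (1 - s) • (u - a • ν) + s • (v - b • ν)
        = ((1 - s) • u + s • v) - ((1 - s) * a + s * b) • ν := by
      intro u v a b
      rw [smul_sub, smul_sub, smul_smul, smul_smul, sub_add_sub_comm, add_smul]
    rw [expand, expand, hscal]
  have hmemC : (1 - s) • (α - c0 • ν) + s • (β - c' • ν) ∈ C :=
    hCc hc0.2 hc'mem.2 h1s hs0 hsum
  have hmemD : (1 - s) • (α - d • ν) + s • (β - d0 • ν) ∈ D :=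
    hDc hdmem.2 hd0.2 h1s hs0 hsum
  rw [key] at hmemC
  exact Set.disjoint_left.mp hdisj hmemC hmemD
end

section
/- Equivalence of the two descriptions of polyhedral cones (Weyl–Minkowski for cones): a subset C ⊆ ℚⁿ is an intersection of finitely many homogeneous closed half-spaces {x : ⟨aᵢ,x⟩ ≥ 0} if and only if there exist finitely many vectors α₁,…,α_k ∈ ℚⁿ with C = {t₁α₁ + ⋯ + t_kα_k : tᵢ ≥ 0}. -/
namespace MW
variable {n : ℕ}

def dot (x y : Fin n → ℚ) : ℚ := ∑ k, x k * y k

lemma dot_comm (x y : Fin n → ℚ) : dot x y = dot y x := by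
  simp [dot, mul_comm]

lemma dot_zero_left (x : Fin n → ℚ) : dot 0 x = 0 := by simp [dot]

lemma dot_smul_left (r : ℚ) (u x : Fin n → ℚ) : dot (r • u) x = r * dot u x := by
  simp [dot, Finset.mul_sum, mul_assoc]

lemma dot_add_left (u v x : Fin n → ℚ) : dot (u + v) x = dot u x + dot v x := by
  simp [dot, add_mul, Finset.sum_add_distrib]


lemma dot_zero_right (x : Fin n → ℚ) : dot x 0 = 0 := by simp [dot]

lemma dot_neg_left (u x : Fin n → ℚ) : dot (-u) x = - dot u x := by
  simp [dot, Finset.sum_neg_distrib]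

lemma dot_sub_right (u x y : Fin n → ℚ) : dot u (x - y) = dot u x - dot u y := by
  simp [dot, mul_sub, Finset.sum_sub_distrib]

lemma dot_smul_right (r : ℚ) (u x : Fin n → ℚ) : dot u (r • x) = r * dot u x := by
  simp only [dot, Finset.mul_sum, Pi.smul_apply, smul_eq_mul]
  exact Finset.sum_congr rfl fun k _ => by ring

lemma dot_add_right (u x y : Fin n → ℚ) : dot u (x + y) = dot u x + dot u y := by
  simp [dot, mul_add, Finset.sum_add_distrib]

lemma dot_sum_left {r : ℕ} (t : Fin r → ℚ) (v : Fin r → (Fin n → ℚ)) (x : Fin n → ℚ) :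
    dot (∑ i, t i • v i) x = ∑ i, t i * dot (v i) x := by
  simp [dot, Finset.sum_mul, Finset.mul_sum, mul_assoc]
  rw [Finset.sum_comm]

def delta {r : ℕ} (j : Fin r) : Fin r → ℚ := fun i => if i = j then 1 else 0

lemma delta_nonneg {r : ℕ} (j i : Fin r) : 0 ≤ delta j i := by
  unfold delta; split <;> norm_num

lemma dot_delta (k : Fin n) (x : Fin n → ℚ) : dot (delta k) x = x k := by
  simp [dot, delta, ite_mul]

lemma sum_delta_smul {r : ℕ} (j : Fin r) (v : Fin r → (Fin n → ℚ)) :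
    ∑ i, delta j i • v i = v j := by
  have : ∀ i, delta j i • v i = if i = j then v j else 0 := by
    intro i; by_cases h : i = j <;> simp [delta, h]
  simp [this]

/-- Fourier–Motzkin elimination of a single variable. -/
lemma fm1 {m : ℕ} (c : Fin m → ℚ) (a : Fin m → (Fin n → ℚ)) :
    ∃ (m' : ℕ) (b : Fin m' → (Fin n → ℚ)), ∀ x : Fin n → ℚ,
      (∃ t : ℚ, ∀ i, 0 ≤ c i * t + dot (a i) x) ↔ (∀ j, 0 ≤ dot (b j) x) := by
  classical
  set B : Fin m × Fin m → (Fin n → ℚ) := fun p =>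
    if c p.1 = 0 ∧ p.1 = p.2 then a p.1
    else if 0 < c p.1 ∧ c p.2 < 0 then (-c p.2) • a p.1 + (c p.1) • a p.2
    else 0 with hB
  refine ⟨m * m, B ∘ finProdFinEquiv.symm, fun x => ?_⟩
  have key : (∃ t : ℚ, ∀ i, 0 ≤ c i * t + dot (a i) x) ↔
      (∀ p : Fin m × Fin m, 0 ≤ dot (B p) x) := by
    constructor
    · rintro ⟨t, ht⟩ ⟨i, j⟩
      by_cases h1 : c i = 0 ∧ i = j
      · obtain ⟨h0, rfl⟩ := h1
        have := ht i
        rw [h0] at this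
        simpa [hB, h0] using this
      · by_cases h2 : 0 < c i ∧ c j < 0
        · have hi := ht i
          have hj := ht j
          simp only [hB, h1, if_false, h2, if_pos, and_self, if_neg]
          rw [dot_add_left, dot_smul_left, dot_smul_left]
          nlinarith [mul_nonneg (by linarith : (0:ℚ) ≤ -c j) hi, mul_nonneg h2.1.le hj]
        · simp [hB, h1, h2, dot_zero_left]
    · intro h
      set d : Fin m → ℚ := fun i => dot (a i) x with hd
      have hzero : ∀ i, c i = 0 → 0 ≤ d i := by
        intro i hci
        have := h (i, i)
        simpa [hB, hci] using this
      have hpair : ∀ i j, 0 < c i → c j < 0 → 0 ≤ (-c j) * d i + c i * d j := by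
        intro i j hi hj
        have := h (i, j)
        have hne : ¬ (c i = 0 ∧ i = j) := by
          rintro ⟨h0, -⟩; exact absurd h0 (ne_of_gt hi)
        rw [hB] at this
        simp only [hne, if_false, hi, hj, and_self, if_pos] at this
        rwa [dot_add_left, dot_smul_left, dot_smul_left] at this
      set P : Finset (Fin m) := Finset.univ.filter fun i => 0 < c i with hP
      set N : Finset (Fin m) := Finset.univ.filter fun i => c i < 0 with hN
      set t : ℚ :=
        if hPne : P.Nonempty then (P.image fun i => -(d i) / c i).max' (hPne.image _)
        else if hNne : N.Nonempty then (N.image fun j => d j / (-(c j))).min' (hNne.image _)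
        else 0 with ht
      refine ⟨t, fun i => ?_⟩
      rcases lt_trichotomy (c i) 0 with hci | hci | hci
      · -- upper bound case: need t ≤ d i / (-(c i))
        have hiN : i ∈ N := by simp [hN, hci]
        have hkey : t ≤ d i / (-(c i)) := by
          by_cases hPne : P.Nonempty
          · rw [ht, dif_pos hPne]
            obtain ⟨i0, hi0P, hi0⟩ := Finset.mem_image.mp
              ((P.image fun i => -(d i) / c i).max'_mem (hPne.image _))
            rw [← hi0]
            have hc0 : 0 < c i0 := by
              simpa [hP] using hi0P
            have hp := hpair i0 i hc0 hci
            rw [div_le_div_iff₀ hc0 (by linarith : (0:ℚ) < -(c i))]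
            nlinarith
          · rw [ht, dif_neg hPne, dif_pos ⟨i, hiN⟩]
            exact Finset.min'_le _ _ (Finset.mem_image_of_mem _ hiN)
        rw [le_div_iff₀ (by linarith : (0:ℚ) < -(c i))] at hkey
        nlinarith
      · simpa [hci] using hzero i hci
      · have hiP : i ∈ P := by simp [hP, hci]
        have hPne : P.Nonempty := ⟨i, hiP⟩
        have hkey : -(d i) / c i ≤ t := by
          rw [ht, dif_pos hPne]
          exact Finset.le_max' _ _ (Finset.mem_image_of_mem (fun i => -(d i) / c i) hiP)
        rw [div_le_iff₀ hci] at hkey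
        nlinarith
  rw [key]
  constructor
  · intro h j; exact h _
  · intro h p
    have := h (finProdFinEquiv p)
    simpa using this

/-- Every finitely generated cone is an intersection of half-spaces. -/
lemma VtoH (r : ℕ) (α : Fin r → (Fin n → ℚ)) :
    ∃ (m : ℕ) (a : Fin m → (Fin n → ℚ)), ∀ x,
      (∃ t : Fin r → ℚ, (∀ i, 0 ≤ t i) ∧ x = ∑ i, t i • α i) ↔
        (∀ i, 0 ≤ dot (a i) x) := by
  induction r with
  | zero =>
    refine ⟨n + n, Sum.elim (fun k => delta k) (fun k => -delta k) ∘ finSumFinEquiv.symm,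
      fun x => ?_⟩
    constructor
    · rintro ⟨t, -, rfl⟩ j
      rcases h : finSumFinEquiv.symm j with k | k <;>
        simp [h, dot_delta, dot_neg_left]
    · intro h
      have hx : ∀ k, x k = 0 := by
        intro k
        have h1 := h (finSumFinEquiv (Sum.inl k))
        have h2 := h (finSumFinEquiv (Sum.inr k))
        simp only [Function.comp_apply, Equiv.symm_apply_apply, Sum.elim_inl,
          Sum.elim_inr, dot_delta, dot_neg_left] at h1 h2
        linarith
      exact ⟨fun i => 0, fun i => le_refl 0, by funext k; simpa using hx k⟩
  | succ r ih =>
    obtain ⟨m, a, ha⟩ := ih (Fin.tail α)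
    obtain ⟨m', b, hb⟩ := fm1 (Fin.cons 1 (fun i => -(dot (a i) (α 0))))
      (Fin.cons 0 a)
    refine ⟨m', b, fun x => ?_⟩
    rw [← hb x]
    constructor
    · rintro ⟨t, ht0, rfl⟩
      refine ⟨t 0, fun i => ?_⟩
      refine Fin.cases ?_ ?_ i
      · simpa [dot_zero_left] using ht0 0
      · intro i
        simp only [Fin.cons_succ]
        have hrest : 0 ≤ dot (a i) (∑ j : Fin r, t j.succ • Fin.tail α j) := by
          exact (ha _).mp ⟨fun j => t j.succ, fun j => ht0 _, rfl⟩ i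
        have hsum : (∑ j, t j • α j) = t 0 • α 0 + ∑ j : Fin r, t j.succ • Fin.tail α j := by
          rw [Fin.sum_univ_succ]; rfl
        rw [hsum, dot_add_right, dot_smul_right]
        linarith
    · rintro ⟨s, hs⟩
      have hs0 : 0 ≤ s := by simpa [dot_zero_left] using hs 0
      have hrest : ∀ i, 0 ≤ dot (a i) (x - s • α 0) := by
        intro i
        have h1 := hs i.succ
        simp only [Fin.cons_succ] at h1
        rw [dot_sub_right, dot_smul_right]
        linarith
      obtain ⟨t', ht'0, ht'⟩ := (ha _).mpr hrest
      refine ⟨Fin.cons s t', Fin.cases hs0 ht'0, ?_⟩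
      rw [Fin.sum_univ_succ]
      simp only [Fin.cons_zero, Fin.cons_succ]
      rw [show (∑ j : Fin r, t' j • α j.succ) = x - s • α 0 from ht'.symm]
      abel

lemma mem_cone_self {r : ℕ} (α : Fin r → (Fin n → ℚ)) (j : Fin r) :
    ∃ t : Fin r → ℚ, (∀ i, 0 ≤ t i) ∧ α j = ∑ i, t i • α i :=
  ⟨delta j, delta_nonneg j, (sum_delta_smul j α).symm⟩

end MW

open MW in
/-- Minkowski–Weyl theorem for polyhedral cones over `ℚ`. A subset
`C ⊆ ℚⁿ` is an intersection of finitely many homogeneous closed half-spaces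
`{x : ⟨aᵢ,x⟩ ≥ 0}` if and only if there exist finitely many vectors `α₁,…,α_k ∈ ℚⁿ`
with `C = {t₁α₁ + ⋯ + t_kα_k : tᵢ ≥ 0}`. -/
theorem minkowski_weyl_cones (n : ℕ) (C : Set (Fin n → ℚ)) :
    (∃ (m : ℕ) (a : Fin m → (Fin n → ℚ)),
        C = {x | ∀ i, 0 ≤ ∑ k, a i k * x k}) ↔
      (∃ (r : ℕ) (α : Fin r → (Fin n → ℚ)),
        C = {x | ∃ t : Fin r → ℚ, (∀ i, 0 ≤ t i) ∧ x = ∑ i, t i • α i}) := by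
  constructor
  · rintro ⟨m, a, rfl⟩
    obtain ⟨p, b, hb⟩ := VtoH m a
    obtain ⟨q, c, hc⟩ := VtoH p b
    refine ⟨p, b, ?_⟩
    ext x
    simp only [Set.mem_setOf_eq]
    have hba : ∀ i j, 0 ≤ dot (b j) (a i) := fun i j => (hb (a i)).mp (mem_cone_self a i) j
    constructor
    · intro hx
      by_contra hxc
      have hck : ∃ k, dot (c k) x < 0 := by
        by_contra hall
        push_neg at hall
        exact hxc ((hc x).mpr fun k => hall k)
      obtain ⟨k, hk⟩ := hck
      have hcb : ∀ j, 0 ≤ dot (b j) (c k) := by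
        intro j
        have := (hc (b j)).mp (mem_cone_self b j) k
        rwa [dot_comm]
      obtain ⟨s, hs0, hseq⟩ := (hb (c k)).mpr hcb
      rw [hseq, dot_sum_left] at hk
      have : 0 ≤ ∑ i, s i * dot (a i) x :=
        Finset.sum_nonneg fun i _ => mul_nonneg (hs0 i) (hx i)
      linarith
    · rintro ⟨t, ht0, rfl⟩ i
      have : dot (∑ j, t j • b j) (a i) = ∑ j, t j * dot (b j) (a i) := dot_sum_left t b (a i)
      have hnn : 0 ≤ dot (∑ j, t j • b j) (a i) := by
        rw [this]
        exact Finset.sum_nonneg fun j _ => mul_nonneg (ht0 j) (hba i j)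
      rw [show (∑ k, a i k * (∑ j, t j • b j) k) = dot (a i) (∑ j, t j • b j) from rfl]
      rwa [dot_comm]
  · rintro ⟨r, α, rfl⟩
    obtain ⟨m, a, ha⟩ := VtoH r α
    refine ⟨m, a, ?_⟩
    ext x
    simpa only [Set.mem_setOf_eq, dot] using ha x
end
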